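/- (Comparison with the doubly robust estimator run on-policy) Let b*_t(s,a) = q_{π,t}(s,a), let μ* = μ^{*,b*}, and let u^{b*} denote u defined with baseline b*. For every t and s: Var( G^{b*}(τ^π_{t:T−1}) | S_t = s ) − Var( G^{b*}(τ^{μ*}_{t:T−1}) | S_t = s ) = Var_{a∼π_t(·|s)}( √(u^{b*}_t(s,a)) ) + δ^{DR}_t(s), where δ^{DR}_{T−1}(s) = 0 and, for t ≤ T−2, δ^{DR}_t(s) = E_{a∼π_t(·|s), s'∼p(·|s,a)}[ Var(G^{b*}(τ^π_{t+1:T−1}) | S_{t+1}=s') − Var(G^{b*}(τ^{μ*}_{t+1:T−1}) | S_{t+1}=s') ]; moreover δ^{DR}_t(s) ≥ 0 for all t and s. -/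

import Mathlib

open Finset

namespace DOpt

variable {S A : Type}

/-- A time-indexed policy: for each time step and state, a probability distribution on actions. -/
def IsPolicy [Fintype A] (μ : ℕ → S → A → ℝ) : Prop :=
  ∀ t s, (∀ a, 0 ≤ μ t s a) ∧ ∑ a, μ t s a = 1

/-- A transition probability kernel on the finite state space. -/
def IsKernel [Fintype S] (p : S → A → S → ℝ) : Prop :=
  ∀ s a, (∀ s', 0 ≤ p s a s') ∧ ∑ s', p s a s' = 1

/-- Action value `q_{π,t}(s,a)` computed with `n` remaining transitions after time `t`
(`n = T - 1 - t` in a horizon-`T` MDP). -/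
noncomputable def qval [Fintype S] [Fintype A] (p : S → A → S → ℝ) (π : ℕ → S → A → ℝ)
    (r : S → A → ℝ) : ℕ → ℕ → S → A → ℝ
  | 0, _, s, a => r s a
  | n + 1, t, s, a =>
      r s a + ∑ s', p s a s' * ∑ a', π (t + 1) s' a' * qval p π r n (t + 1) s' a'

/-- `q_{π,t}(s,a)` in the horizon-`T` MDP. -/
noncomputable def qf [Fintype S] [Fintype A] (T : ℕ) (p : S → A → S → ℝ)
    (π : ℕ → S → A → ℝ) (r : S → A → ℝ) (t : ℕ) (s : S) (a : A) : ℝ :=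
  qval p π r (T - 1 - t) t s a

/-- `v_{π,t}(s) = Σ_a π_t(a|s) q_{π,t}(s,a)`. -/
noncomputable def vf [Fintype S] [Fintype A] (T : ℕ) (p : S → A → S → ℝ)
    (π : ℕ → S → A → ℝ) (r : S → A → ℝ) (t : ℕ) (s : S) : ℝ :=
  ∑ a, π t s a * qf T p π r t s a

/-- `ν_{π,t}(s,a) = Var_{s' ∼ p(·|s,a)}(v_{π,t+1}(s'))` for `t ≤ T-2`, and `0` at `t = T-1`. -/
noncomputable def nuf [Fintype S] [Fintype A] (T : ℕ) (p : S → A → S → ℝ)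
    (π : ℕ → S → A → ℝ) (r : S → A → ℝ) (t : ℕ) (s : S) (a : A) : ℝ :=
  if t + 2 ≤ T then
    (∑ s', p s a s' * (vf T p π r (t + 1) s') ^ 2) -
      (∑ s', p s a s' * vf T p π r (t + 1) s') ^ 2
  else 0

/-- Trajectories with `n` further transitions after the first action:
`(a_t, s_{t+1}, a_{t+1}, …, s_{t+n}, a_{t+n})`. -/
def Traj (S A : Type) : ℕ → Type
  | 0 => A
  | n + 1 => A × S × Traj S A n

/-- Expectation, over trajectories generated by the behavior policy `μ` starting at time `t`
in state `s` with `n` further transitions, of a function `f` of the trajectory. -/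
noncomputable def Exp [Fintype S] [Fintype A] (p : S → A → S → ℝ) (μ : ℕ → S → A → ℝ) :
    (n : ℕ) → ℕ → S → (Traj S A n → ℝ) → ℝ
  | 0, t, s, f => ∑ a, μ t s a * f a
  | n + 1, t, s, f =>
      ∑ a, μ t s a * ∑ s', p s a s' * Exp p μ n (t + 1) s' (fun τ => f (a, s', τ))

/-- Conditional variance of a function of the trajectory, given `S_t = s`. -/
noncomputable def Var [Fintype S] [Fintype A] (p : S → A → S → ℝ) (μ : ℕ → S → A → ℝ)
    (n : ℕ) (t : ℕ) (s : S) (f : Traj S A n → ℝ) : ℝ :=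
  Exp p μ n t s (fun τ => (f τ) ^ 2) - (Exp p μ n t s f) ^ 2

/-- `b̄_t(s) = Σ_a π_t(a|s) b_t(s,a)`. -/
noncomputable def bbar [Fintype A] (π : ℕ → S → A → ℝ) (b : ℕ → S → A → ℝ)
    (t : ℕ) (s : S) : ℝ :=
  ∑ a, π t s a * b t s a

/-- The per-decision importance-sampling estimator `G^b` with baseline `b`, target policy `π`
and behavior policy `μ`, as a function of the trajectory from time `t` (with `n` further
transitions, `n = T - 1 - t`). -/
noncomputable def Gest [Fintype S] [Fintype A] (π μ : ℕ → S → A → ℝ) (r : S → A → ℝ)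
    (b : ℕ → S → A → ℝ) : (n : ℕ) → ℕ → S → Traj S A n → ℝ
  | 0, t, s, a => (π t s a / μ t s a) * (r s a - b t s a) + bbar π b t s
  | n + 1, t, s, (a, s', τ) =>
      (π t s a / μ t s a) * (r s a + Gest π μ r b n (t + 1) s' τ - b t s a) + bbar π b t s

/-- Normalization of a weight vector into a probability distribution; the uniform distribution
when the total weight vanishes. -/
noncomputable def normPol [Fintype A] (w : A → ℝ) (a : A) : ℝ :=
  if (∑ a', w a') = 0 then ((Fintype.card A : ℝ))⁻¹ else w a / ∑ a', w a'

/-- `u_{π,t}(s,a)` (with baseline `b`), defined backwards in time together with the optimal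
behavior policy `μ*`; the first argument is the number `n = T - 1 - t` of remaining
transitions after time `t`. -/
noncomputable def uAux [Fintype S] [Fintype A] (T : ℕ) (p : S → A → S → ℝ)
    (π : ℕ → S → A → ℝ) (r : S → A → ℝ) (b : ℕ → S → A → ℝ) :
    ℕ → ℕ → S → A → ℝ
  | 0, t, s, a => (qf T p π r t s a - b t s a) ^ 2
  | n + 1, t, s, a =>
      (qf T p π r t s a - b t s a) ^ 2 + nuf T p π r t s a +
        ∑ s', p s a s' *
          Var p
            (fun t' s₁ a₁ => normPol (fun a₂ =>
              π t' s₁ a₂ * Real.sqrt (uAux T p π r b (n - (t' - (t + 1))) t' s₁ a₂)) a₁)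
            n (t + 1) s'
            (Gest π
              (fun t' s₁ a₁ => normPol (fun a₂ =>
                π t' s₁ a₂ * Real.sqrt (uAux T p π r b (n - (t' - (t + 1))) t' s₁ a₂)) a₁)
              r b n (t + 1) s')
  termination_by n => n
  decreasing_by all_goals omega

/-- `u_{π,t}(s,a)` in the horizon-`T` MDP, with baseline `b`. -/
noncomputable def uf [Fintype S] [Fintype A] (T : ℕ) (p : S → A → S → ℝ)
    (π : ℕ → S → A → ℝ) (r : S → A → ℝ) (b : ℕ → S → A → ℝ) (t : ℕ) (s : S) (a : A) : ℝ :=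
  uAux T p π r b (T - 1 - t) t s a

/-- The optimal behavior policy `μ*_t(a|s) ∝ π_t(a|s) √(u_{π,t}(s,a))` tailored to the
baseline `b` (uniform when all the weights vanish). -/
noncomputable def mustar [Fintype S] [Fintype A] (T : ℕ) (p : S → A → S → ℝ)
    (π : ℕ → S → A → ℝ) (r : S → A → ℝ) (b : ℕ → S → A → ℝ) (t : ℕ) (s : S) (a : A) : ℝ :=
  normPol (fun a' => π t s a' * Real.sqrt (uf T p π r b t s a')) a

/-- Conditional expectation `E[G^b(τ^μ_{t:T-1}) | S_t = s]`. -/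
noncomputable def ExpG [Fintype S] [Fintype A] (T : ℕ) (p : S → A → S → ℝ)
    (π μ : ℕ → S → A → ℝ) (r : S → A → ℝ) (b : ℕ → S → A → ℝ) (t : ℕ) (s : S) : ℝ :=
  Exp p μ (T - 1 - t) t s (Gest π μ r b (T - 1 - t) t s)

/-- Conditional variance `Var(G^b(τ^μ_{t:T-1}) | S_t = s)`. -/
noncomputable def VarG [Fintype S] [Fintype A] (T : ℕ) (p : S → A → S → ℝ)
    (π μ : ℕ → S → A → ℝ) (r : S → A → ℝ) (b : ℕ → S → A → ℝ) (t : ℕ) (s : S) : ℝ :=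
  Var p μ (T - 1 - t) t s (Gest π μ r b (T - 1 - t) t s)

/-- Membership in the enlarged policy-search space
`Λ = {μ : ∀ t,s,a, μ_t(a|s) = 0 → π_t(a|s)·u_{π,t}(s,a) = 0}`. -/
def inLambda [Fintype S] [Fintype A] (T : ℕ) (p : S → A → S → ℝ)
    (π : ℕ → S → A → ℝ) (r : S → A → ℝ) (b : ℕ → S → A → ℝ) (μ : ℕ → S → A → ℝ) : Prop :=
  ∀ t s a, t < T → μ t s a = 0 → π t s a * uf T p π r b t s a = 0


/-- The optimal baseline `b*_t(s,a) = q_{π,t}(s,a)`. -/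
noncomputable def bstar [Fintype S] [Fintype A] (T : ℕ) (p : S → A → S → ℝ)
    (π : ℕ → S → A → ℝ) (r : S → A → ℝ) : ℕ → S → A → ℝ :=
  fun t s a => qf T p π r t s a

/-- The zero baseline: with it, `Gest` is the plain PDIS estimator `G^{PDIS}`. -/
def zerob : ℕ → S → A → ℝ := fun _ _ _ => 0

/-- `δ^{DR}_t(s)`: compounded future variance reduction of the doubly optimal estimator
relative to the doubly robust estimator run on-policy (baseline `b*`, behavior policy `π`). -/
noncomputable def deltaDR {S A : Type} [Fintype S] [Fintype A] [Nonempty A]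
    (T : ℕ) (p : S → A → S → ℝ) (π : ℕ → S → A → ℝ) (r : S → A → ℝ)
    (t : ℕ) (s : S) : ℝ :=
  if t + 2 ≤ T then
    ∑ a, π t s a * ∑ s', p s a s' *
      (VarG T p π π r (bstar T p π r) (t + 1) s' -
        VarG T p π (mustar T p π r (bstar T p π r)) r (bstar T p π r) (t + 1) s')
  else 0

/-!
With the baseline `q_π` the estimator satisfies
`G_t = ρ_t (G_{t+1} - E_{s' ∼ p(·|S_t,A_t)} v_{t+1}(s')) + v_t(S_t)`, so it is unbiased under every
behavior policy, and conditioning on the first action and the next state gives the recursion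
`Var_t(s) = Σ_a μ_t(a|s) ρ_t(a)² (ν_t(s,a) + E_{s'} Var_{t+1}(s'))`.
On-policy this is `Σ_a π (ν + E Var^π_{t+1})`; under `μ*` the bracket is `u_t(s,a)` and the sum is
the equality case of Cauchy–Schwarz, `(Σ_a π √u)²`. As `Σ_a π (√u)² = Σ_a π (ν + E Var^{μ*}_{t+1})`,
subtracting yields the identity, with `δ^{DR}_t` collecting the gaps at time `t + 1`. Each gap is
again a variance plus `δ^{DR}_{t+1}`, so `δ^{DR} ≥ 0` by backward induction.
-/

section Expectation

variable [Fintype S] [Fintype A] {p : S → A → S → ℝ} {μ : ℕ → S → A → ℝ}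

theorem Exp_add : ∀ (n t : ℕ) (s : S) (f g : Traj S A n → ℝ),
    Exp p μ n t s (fun τ => f τ + g τ) = Exp p μ n t s f + Exp p μ n t s g
  | 0, t, s, f, g => by simp only [Exp, mul_add, sum_add_distrib]
  | n + 1, t, s, f, g => by simp only [Exp, Exp_add n, mul_add, sum_add_distrib]

theorem Exp_const_mul : ∀ (n t : ℕ) (s : S) (c : ℝ) (f : Traj S A n → ℝ),
    Exp p μ n t s (fun τ => c * f τ) = c * Exp p μ n t s f
  | 0, t, s, c, f => by simp only [Exp, mul_sum, mul_left_comm]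
  | n + 1, t, s, c, f => by simp only [Exp, Exp_const_mul n, mul_sum, mul_left_comm]

theorem Exp_const (hp : IsKernel p) (hμ : IsPolicy μ) :
    ∀ (n t : ℕ) (s : S) (c : ℝ), Exp p μ n t s (fun _ => c) = c
  | 0, t, s, c => by simp only [Exp, ← sum_mul, (hμ t s).2, one_mul]
  | n + 1, t, s, c => by
    have hp1 : ∀ a, ∑ s', p s a s' = 1 := fun a => (hp s a).2
    simp only [Exp, Exp_const hp hμ n, ← sum_mul, hp1, (hμ t s).2, one_mul]

theorem Exp_nonneg (hp : IsKernel p) (hμ : IsPolicy μ) :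
    ∀ (n t : ℕ) (s : S) (f : Traj S A n → ℝ), (∀ τ, 0 ≤ f τ) → 0 ≤ Exp p μ n t s f
  | 0, t, s, _, hf => sum_nonneg fun a _ => mul_nonneg ((hμ t s).1 a) (hf a)
  | n + 1, t, s, _, hf => sum_nonneg fun a _ => mul_nonneg ((hμ t s).1 a) <|
      sum_nonneg fun s' _ => mul_nonneg ((hp s a).1 s') <|
        Exp_nonneg hp hμ n (t + 1) s' _ fun _ => hf _

theorem Exp_affine (hp : IsKernel p) (hμ : IsPolicy μ) (n t : ℕ) (s : S) (f : Traj S A n → ℝ)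
    (c m v : ℝ) :
    Exp p μ n t s (fun τ => c * (f τ - m) + v) = c * (Exp p μ n t s f - m) + v := by
  have hsplit : (fun τ => c * (f τ - m) + v) = fun τ => c * f τ + (v - c * m) := by
    funext τ; ring
  rw [hsplit, Exp_add, Exp_const_mul, Exp_const hp hμ]
  ring

theorem Exp_affine_sq (hp : IsKernel p) (hμ : IsPolicy μ) (n t : ℕ) (s : S) (f : Traj S A n → ℝ)
    (c m v : ℝ) :
    Exp p μ n t s (fun τ => (c * (f τ - m) + v) ^ 2) =
      c ^ 2 * (Var p μ n t s f + (Exp p μ n t s f - m) ^ 2) +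
        2 * c * v * (Exp p μ n t s f - m) + v ^ 2 := by
  have hsplit : (fun τ => (c * (f τ - m) + v) ^ 2) =
      fun τ => c ^ 2 * f τ ^ 2 + ((2 * c * v - 2 * c ^ 2 * m) * f τ + (c * m - v) ^ 2) := by
    funext τ; ring
  rw [hsplit, Exp_add, Exp_add, Exp_const_mul, Exp_const_mul, Exp_const hp hμ, Var]
  ring

theorem Var_nonneg (hp : IsKernel p) (hμ : IsPolicy μ) (n t : ℕ) (s : S) (f : Traj S A n → ℝ) :
    0 ≤ Var p μ n t s f := by
  have h := Exp_nonneg hp hμ n t s (fun τ => (1 * (f τ - Exp p μ n t s f) + 0) ^ 2)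
    fun _ => sq_nonneg _
  rw [Exp_affine_sq hp hμ] at h
  simpa using h

theorem Var_const (hp : IsKernel p) (hμ : IsPolicy μ) (n t : ℕ) (s : S) (c : ℝ) :
    Var p μ n t s (fun _ => c) = 0 := by
  rw [Var, Exp_const hp hμ, Exp_const hp hμ, sub_self]

end Expectation

section PolicyCongr

variable [Fintype S] [Fintype A] {μ μ' : ℕ → S → A → ℝ}

theorem Exp_congr_policy (p : S → A → S → ℝ) : ∀ (n t : ℕ),
    (∀ t', t ≤ t' → t' ≤ t + n → μ t' = μ' t') → Exp p μ n t = Exp p μ' n t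
  | 0, t, h => by funext s f; simp only [Exp, h t le_rfl le_rfl]
  | n + 1, t, h => by
    funext s f
    simp only [Exp, h t le_rfl (by omega),
      Exp_congr_policy p n (t + 1) fun t' h₁ h₂ => h t' (by omega) (by omega)]

theorem Gest_congr_behavior (π : ℕ → S → A → ℝ) (r : S → A → ℝ) (b : ℕ → S → A → ℝ) :
    ∀ (n t : ℕ), (∀ t', t ≤ t' → t' ≤ t + n → μ t' = μ' t') →
      Gest π μ r b n t = Gest π μ' r b n t
  | 0, t, h => by funext s a; simp only [Gest, h t le_rfl le_rfl]
  | n + 1, t, h => by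
    funext s ⟨a, s', τ⟩
    simp only [Gest, h t le_rfl (by omega),
      Gest_congr_behavior π r b n (t + 1) fun t' h₁ h₂ => h t' (by omega) (by omega)]

theorem Var_Gest_congr_behavior (p : S → A → S → ℝ) (π : ℕ → S → A → ℝ) (r : S → A → ℝ)
    (b : ℕ → S → A → ℝ) (n t : ℕ) (h : ∀ t', t ≤ t' → t' ≤ t + n → μ t' = μ' t') (s : S) :
    Var p μ n t s (Gest π μ r b n t s) = Var p μ' n t s (Gest π μ' r b n t s) := by
  simp only [Var, Gest_congr_behavior π r b n t h, Exp_congr_policy p n t h]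

end PolicyCongr

section Normalization

variable [Fintype A]

theorem normPol_nonneg {w : A → ℝ} (hw : ∀ a, 0 ≤ w a) (a : A) : 0 ≤ normPol w a := by
  unfold normPol
  split
  · positivity
  · exact div_nonneg (hw a) (sum_nonneg fun a' _ => hw a')

theorem sum_normPol [Nonempty A] (w : A → ℝ) : ∑ a, normPol w a = 1 := by
  unfold normPol
  split_ifs with h
  · simp
  · rw [← sum_div, div_self h]

/-- Equality case of Cauchy–Schwarz: normalizing the weights `c a * √(u a)` minimizes
`∑ a, ν a * (c a / ν a) ^ 2 * u a` over distributions `ν`. -/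
theorem sum_normPol_mul_div_sq (c u : A → ℝ) (hc : ∀ a, 0 ≤ c a) (hu : ∀ a, 0 ≤ u a) :
    ∑ a, normPol (fun a' => c a' * √(u a')) a *
        (c a / normPol (fun a' => c a' * √(u a')) a) ^ 2 * u a =
      (∑ a, c a * √(u a)) ^ 2 := by
  set w : A → ℝ := fun a => c a * √(u a) with hw_def
  have hw : ∀ a, 0 ≤ w a := fun a => mul_nonneg (hc a) (Real.sqrt_nonneg _)
  have hterm : ∀ a, normPol w a * (c a / normPol w a) ^ 2 * u a = w a ^ 2 / normPol w a := by
    intro a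
    have hsq : w a ^ 2 = c a ^ 2 * u a := by rw [hw_def, mul_pow, Real.sq_sqrt (hu a)]
    rw [hsq]
    rcases eq_or_ne (normPol w a) 0 with h | h
    · simp [h]
    · field_simp
  simp only [hterm]
  rcases eq_or_ne (∑ a, w a) 0 with hW | hW
  · have hw0 : ∀ a, w a = 0 := fun a =>
      (sum_eq_zero_iff_of_nonneg fun a _ => hw a).1 hW a (mem_univ a)
    simp [hw0]
  · have hratio : ∀ a, w a ^ 2 / normPol w a = w a * ∑ a', w a' := by
      intro a
      rw [normPol, if_neg hW]
      rcases eq_or_ne (w a) 0 with h | h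
      · simp [h]
      · field_simp
    rw [sum_congr rfl fun a _ => hratio a, ← sum_mul, sq]

end Normalization

section BaselineQ

variable [Fintype S] [Fintype A] {T : ℕ} {p : S → A → S → ℝ} {π μ : ℕ → S → A → ℝ}
  {r : S → A → ℝ} {t : ℕ}

theorem qf_of_le (h : T ≤ t + 1) (s : S) (a : A) : qf T p π r t s a = r s a := by
  rw [qf, show T - 1 - t = 0 by omega, qval]

theorem qf_eq_add_sum_vf (h : t + 2 ≤ T) (s : S) (a : A) :
    qf T p π r t s a = r s a + ∑ s', p s a s' * vf T p π r (t + 1) s' := by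
  rw [qf, show T - 1 - t = T - 1 - (t + 1) + 1 by omega, qval]
  rfl

theorem sum_mul_sub_sum_mul_eq_zero {ι : Type} [Fintype ι] {w : ι → ℝ} (hw : ∑ i, w i = 1)
    (f : ι → ℝ) : ∑ i, w i * (f i - ∑ j, w j * f j) = 0 := by
  simp only [mul_sub, sum_sub_distrib, ← sum_mul, hw, one_mul, sub_self]

theorem sum_mul_affine_second_moment {ι : Type} [Fintype ι] {w : ι → ℝ} (hw : ∑ i, w i = 1)
    (x V : ι → ℝ) (c v : ℝ) :
    ∑ i, w i * (c ^ 2 * (V i + (x i - ∑ j, w j * x j) ^ 2) +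
        2 * c * v * (x i - ∑ j, w j * x j) + v ^ 2) =
      c ^ 2 * (∑ i, w i * (x i - ∑ j, w j * x j) ^ 2 + ∑ i, w i * V i) + v ^ 2 := by
  have hcentered := sum_mul_sub_sum_mul_eq_zero hw x
  simp only [mul_add, sum_add_distrib, mul_left_comm (w _), ← mul_sum, hcentered, ← sum_mul, hw]
  ring

theorem nuf_eq_sum_sq (hp : IsKernel p) (h : t + 2 ≤ T) (s : S) (a : A) :
    nuf T p π r t s a = ∑ s', p s a s' *
      (vf T p π r (t + 1) s' - ∑ s'', p s a s'' * vf T p π r (t + 1) s'') ^ 2 := by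
  rw [nuf, if_pos h]
  set m := ∑ s'', p s a s'' * vf T p π r (t + 1) s''
  have hexpand : ∀ s', p s a s' * (vf T p π r (t + 1) s' - m) ^ 2 =
      p s a s' * vf T p π r (t + 1) s' ^ 2 - 2 * m * (p s a s' * vf T p π r (t + 1) s') +
        m ^ 2 * p s a s' := fun s' => by ring
  rw [sum_congr rfl fun s' _ => hexpand s', sum_add_distrib, sum_sub_distrib, ← mul_sum,
    ← mul_sum, (hp s a).2]
  ring

theorem bbar_bstar : bbar π (bstar T p π r) = vf T p π r := rfl

theorem Gest_bstar_zero (h : T ≤ t + 1) (s : S) :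
    Gest π μ r (bstar T p π r) 0 t s = fun _ => vf T p π r t s := by
  funext a
  simp only [Gest, bstar, bbar_bstar]
  rw [qf_of_le (A := A) h s a, sub_self, mul_zero, zero_add]

theorem Gest_bstar_succ (h : t + 2 ≤ T) (n : ℕ) (s : S) (a : A) (s' : S) (τ : Traj S A n) :
    Gest π μ r (bstar T p π r) (n + 1) t s (a, s', τ) =
      π t s a / μ t s a * (Gest π μ r (bstar T p π r) n (t + 1) s' τ -
        ∑ s'', p s a s'' * vf T p π r (t + 1) s'') + vf T p π r t s := by
  simp only [Gest, bstar, qf_eq_add_sum_vf h, bbar_bstar]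
  ring

theorem Exp_Gest_bstar (hp : IsKernel p) (hμ : IsPolicy μ) :
    ∀ (n t : ℕ), T - 1 - t = n → ∀ s : S,
      Exp p μ n t s (Gest π μ r (bstar T p π r) n t s) = vf T p π r t s
  | 0, t, hn, s => by
    rw [Gest_bstar_zero (by omega), Exp_const hp hμ]
  | n + 1, t, hn, s => by
    simp only [Exp, Gest_bstar_succ (by omega : t + 2 ≤ T), Exp_affine hp hμ,
      Exp_Gest_bstar hp hμ n (t + 1) (by omega), mul_add, sum_add_distrib,
      mul_left_comm _ (π t s _ / μ t s _), ← mul_sum, sum_mul_sub_sum_mul_eq_zero (hp s _).2,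
      mul_zero, zero_add, ← sum_mul, (hp s _).2, one_mul, (hμ t s).2]

theorem VarG_bstar_of_le (hp : IsKernel p) (hμ : IsPolicy μ) (h : T ≤ t + 1) (s : S) :
    VarG T p π μ r (bstar T p π r) t s = 0 := by
  rw [VarG, show T - 1 - t = 0 by omega, Gest_bstar_zero h, Var_const hp hμ]

theorem VarG_bstar_succ (hp : IsKernel p) (hμ : IsPolicy μ) (h : t + 2 ≤ T) (s : S) :
    VarG T p π μ r (bstar T p π r) t s =
      ∑ a, μ t s a * (π t s a / μ t s a) ^ 2 *
        (nuf T p π r t s a + ∑ s', p s a s' * VarG T p π μ r (bstar T p π r) (t + 1) s') := by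
  obtain ⟨n, hn⟩ : ∃ n, T - 1 - (t + 1) = n := ⟨_, rfl⟩
  have hn' : T - 1 - t = n + 1 := by omega
  have hnext : ∀ s', VarG T p π μ r (bstar T p π r) (t + 1) s' =
      Var p μ n (t + 1) s' (Gest π μ r (bstar T p π r) n (t + 1) s') := fun s' => by
    rw [VarG, hn]
  rw [VarG, hn', Var, Exp_Gest_bstar hp hμ (n + 1) t hn']
  simp only [hnext, Exp, Gest_bstar_succ h, Exp_affine_sq hp hμ,
    Exp_Gest_bstar hp hμ n (t + 1) hn, sum_mul_affine_second_moment (hp s _).2,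
    ← nuf_eq_sum_sq hp h]
  rw [sum_congr rfl fun a _ => mul_add _ _ _, sum_add_distrib, ← sum_mul, (hμ t s).2, one_mul,
    add_sub_cancel_right]
  simp only [mul_assoc]

theorem uf_bstar_of_le (h : T ≤ t + 1) (s : S) (a : A) :
    uf T p π r (bstar T p π r) t s a = 0 := by
  rw [uf, show T - 1 - t = 0 by omega, uAux,
    show qf T p π r t s a - bstar T p π r t s a = 0 from sub_self _, sq, mul_zero]

theorem VarG_onPolicy_bstar_succ (hp : IsKernel p) (hπ : IsPolicy π) (h : t + 2 ≤ T) (s : S) :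
    VarG T p π π r (bstar T p π r) t s =
      ∑ a, π t s a * (nuf T p π r t s a +
        ∑ s', p s a s' * VarG T p π π r (bstar T p π r) (t + 1) s') := by
  have hweight : ∀ x : ℝ, x * (x / x) ^ 2 = x := fun x => by
    rcases eq_or_ne x 0 with hx | hx <;> simp [hx]
  simp only [VarG_bstar_succ hp hπ h, hweight]

end BaselineQ

section OptimalBehavior

variable [Fintype S] [Fintype A] {T : ℕ} {p : S → A → S → ℝ}
  {π : ℕ → S → A → ℝ} {r : S → A → ℝ} {t : ℕ}

theorem uf_bstar_succ (h : t + 2 ≤ T) (s : S) (a : A) :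
    uf T p π r (bstar T p π r) t s a = nuf T p π r t s a +
      ∑ s', p s a s' *
        VarG T p π (mustar T p π r (bstar T p π r)) r (bstar T p π r) (t + 1) s' := by
  obtain ⟨n, hn⟩ : ∃ n, T - 1 - (t + 1) = n := ⟨_, rfl⟩
  rw [uf, show T - 1 - t = n + 1 by omega, uAux,
    show qf T p π r t s a - bstar T p π r t s a = 0 from sub_self _, sq, mul_zero, zero_add]
  congr 1
  refine sum_congr rfl fun s' _ => congrArg (p s a s' * ·) ?_
  rw [VarG, hn]
  -- `uAux` writes `μ*` with the remaining-step count `n - (t' - (t + 1))` in place of `T - 1 - t'`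
  refine Var_Gest_congr_behavior p π r _ n (t + 1) (fun t' h₁ h₂ => ?_) s'
  funext s₁ a₁
  simp only [mustar, uf, show T - 1 - t' = n - (t' - (t + 1)) by omega]

variable [Nonempty A]

theorem isPolicy_mustar (hπ : IsPolicy π) (b : ℕ → S → A → ℝ) :
    IsPolicy (mustar T p π r b) := fun t s =>
  ⟨normPol_nonneg fun a => mul_nonneg ((hπ t s).1 a) (Real.sqrt_nonneg _), sum_normPol _⟩

theorem uf_bstar_nonneg (hp : IsKernel p) (hπ : IsPolicy π) (s : S) (a : A) :
    0 ≤ uf T p π r (bstar T p π r) t s a := by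
  obtain h | h : T ≤ t + 1 ∨ t + 2 ≤ T := by omega
  · rw [uf_bstar_of_le h]
  · rw [uf_bstar_succ h, nuf_eq_sum_sq hp h]
    exact add_nonneg (sum_nonneg fun s' _ => mul_nonneg ((hp s a).1 s') (sq_nonneg _))
      (sum_nonneg fun s' _ => mul_nonneg ((hp s a).1 s')
        (Var_nonneg hp (isPolicy_mustar hπ _) _ _ _ _))

theorem VarG_mustar_bstar_succ (hp : IsKernel p) (hπ : IsPolicy π) (h : t + 2 ≤ T) (s : S) :
    VarG T p π (mustar T p π r (bstar T p π r)) r (bstar T p π r) t s =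
      (∑ a, π t s a * √(uf T p π r (bstar T p π r) t s a)) ^ 2 := by
  rw [VarG_bstar_succ hp (isPolicy_mustar hπ _) h]
  simp only [← uf_bstar_succ h]
  exact sum_normPol_mul_div_sq (π t s) _ (hπ t s).1 fun a => uf_bstar_nonneg hp hπ s a

theorem VarG_sub_VarG_mustar (hp : IsKernel p) (hπ : IsPolicy π) (t : ℕ) (s : S) :
    VarG T p π π r (bstar T p π r) t s -
        VarG T p π (mustar T p π r (bstar T p π r)) r (bstar T p π r) t s =
      ((∑ a, π t s a * √(uf T p π r (bstar T p π r) t s a) ^ 2) -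
          (∑ a, π t s a * √(uf T p π r (bstar T p π r) t s a)) ^ 2) +
        deltaDR T p π r t s := by
  obtain h | h : T ≤ t + 1 ∨ t + 2 ≤ T := by omega
  · rw [VarG_bstar_of_le hp hπ h, VarG_bstar_of_le hp (isPolicy_mustar hπ _) h, deltaDR,
      if_neg (by omega)]
    simp [uf_bstar_of_le h]
  · have hsq : ∀ a, √(uf T p π r (bstar T p π r) t s a) ^ 2 = nuf T p π r t s a +
        ∑ s', p s a s' *
          VarG T p π (mustar T p π r (bstar T p π r)) r (bstar T p π r) (t + 1) s' := fun a => by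
      rw [Real.sq_sqrt (uf_bstar_nonneg hp hπ s a), uf_bstar_succ h]
    rw [VarG_onPolicy_bstar_succ hp hπ h, VarG_mustar_bstar_succ hp hπ h, deltaDR, if_pos h]
    simp only [hsq, mul_add, mul_sub, sum_add_distrib, sum_sub_distrib]
    ring

theorem deltaDR_nonneg (hp : IsKernel p) (hπ : IsPolicy π) (t : ℕ) (s : S) :
    0 ≤ deltaDR T p π r t s := by
  rw [deltaDR]
  split_ifs
  · refine sum_nonneg fun a _ => mul_nonneg ((hπ t s).1 a) <|
      sum_nonneg fun s' _ => mul_nonneg ((hp s a).1 s') ?_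
    rw [VarG_sub_VarG_mustar hp hπ]
    -- `Var p π 0 (t + 1) s'` is the variance over `a ∼ π_{t+1}(·|s')`
    exact add_nonneg (Var_nonneg hp hπ 0 (t + 1) s' fun a => √(uf T p π r _ (t + 1) s' a))
      (deltaDR_nonneg hp hπ (t + 1) s')
  · exact le_rfl
termination_by T - t

end OptimalBehavior

theorem comparison_with_dr_general {S A : Type} [Fintype S] [Fintype A] [Nonempty A]
    (T : ℕ)
    (p : S → A → S → ℝ) (hp : IsKernel p)
    (r : S → A → ℝ)
    (π : ℕ → S → A → ℝ) (hπ : IsPolicy π)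
    (t : ℕ) (s : S) :
    (VarG T p π π r (bstar T p π r) t s -
        VarG T p π (mustar T p π r (bstar T p π r)) r (bstar T p π r) t s =
      ((∑ a, π t s a * Real.sqrt (uf T p π r (bstar T p π r) t s a) ^ 2) -
          (∑ a, π t s a * Real.sqrt (uf T p π r (bstar T p π r) t s a)) ^ 2) +
        deltaDR T p π r t s) ∧
    0 ≤ deltaDR T p π r t s :=
  ⟨VarG_sub_VarG_mustar hp hπ t s, deltaDR_nonneg hp hπ t s⟩

/-- Comparison with the doubly robust estimator run on-policy: with
`b*_t(s,a) = q_{π,t}(s,a)`, `μ* = μ^{*,b*}` and `u^{b*}` the function `u` for `b*`, for every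
`t` and `s`,
`Var(G^{b*}(τ^π_{t:T−1})|S_t=s) − Var(G^{b*}(τ^{μ*}_{t:T−1})|S_t=s)
  = Var_{a∼π_t(·|s)}(√(u^{b*}_t(s,a))) + δ^{DR}_t(s)`,
and moreover `δ^{DR}_t(s) ≥ 0`. -/
theorem comparison_with_dr {S A : Type} [Fintype S] [Fintype A] [Nonempty A]
    (T : ℕ) (hT : 1 ≤ T)
    (p : S → A → S → ℝ) (hp : IsKernel p)
    (r : S → A → ℝ)
    (π : ℕ → S → A → ℝ) (hπ : IsPolicy π)
    (t : ℕ) (ht : t < T) (s : S) :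
    (VarG T p π π r (bstar T p π r) t s -
        VarG T p π (mustar T p π r (bstar T p π r)) r (bstar T p π r) t s =
      ((∑ a, π t s a * Real.sqrt (uf T p π r (bstar T p π r) t s a) ^ 2) -
          (∑ a, π t s a * Real.sqrt (uf T p π r (bstar T p π r) t s a)) ^ 2) +
        deltaDR T p π r t s) ∧
    0 ≤ deltaDR T p π r t s :=
  comparison_with_dr_general T p hp r π hπ t s

end DOpt
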